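/- arXiv:2405.04389 — 4 statements merged into one kernel-verified Lean document; each statement's English description precedes it below -/
import Mathlib

section
/- Let $\mathcal{D}$ be a symmetric monoidal triangulated category and $f: A \to B$ a morphism of algebra objects in $\mathcal{D}$. If $M$ is a $B$-module object such that $A$ is a direct summand of the underlying $A$-module $f_* M$ (restriction of $M$ along $f$), then the map $A \to B$ splits in $\mathcal{D}$ (i.e., admits a retraction $B \to A$ with composite the identity on $A$). -/
/-!
Let `B` act on the point `η ≫ i : 𝟙 ⟶ M`, i.e. take `b ↦ b • i(1)`, and put
`r := (b ↦ b • i(1)) ≫ p`. By `A`-linearity of `i`, precomposing with `f` gives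
`a ↦ f(a) • i(1) = i(a · 1) = i(a)`, so `f ≫ r = i ≫ p = 𝟙`.
-/

open CategoryTheory CategoryTheory.Limits CategoryTheory.Pretriangulated MonoidalCategory

open CategoryTheory.MonObj

namespace CategoryTheory.Mod

variable {C : Type*} [Category C] [MonoidalCategory C]

def orbitMap {B : C} [MonObj B] (M : Mod C B) (m : 𝟙_ C ⟶ M.X) : B ⟶ M.X :=
  (ρ_ B).inv ≫ B ◁ m ≫ γ[B, M.X]

theorem comp_orbitMap {A B : C} [MonObj A] [MonObj B] (f : A ⟶ B) [IsMonHom f] (M : Mod C B)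
    (m : 𝟙_ C ⟶ M.X) : f ≫ orbitMap M m = orbitMap ((comap f).obj M) m := by
  rw [orbitMap, rightUnitor_inv_naturality_assoc, ← whisker_exchange_assoc]
  rfl

theorem orbitMap_one_comp {A : C} [MonObj A] (N : Mod C A) (g : A ⟶ N.X)
    (hg : μ[A] ≫ g = A ◁ g ≫ γ[A, N.X]) : orbitMap N (η[A] ≫ g) = g := by
  rw [orbitMap, MonoidalCategory.whiskerLeft_comp_assoc, ← hg, mul_one_assoc,
    Iso.inv_hom_id_assoc]

end CategoryTheory.Mod

/-- let `𝒟` be a symmetric monoidal triangulated category and `f : A ⟶ B` a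
morphism of algebra (monoid) objects in `𝒟`.  If `M` is a `B`-module object such that `A`
is a direct summand of `f_* M` (the restriction of `M` to an `A`-module along `f`) in the
category of `A`-modules, then `f : A ⟶ B` splits in `𝒟`, i.e. admits a retraction
`r : B ⟶ A` with `f ≫ r = 𝟙 A`. -/
theorem algebra_map_splits_of_summand_of_module
    {D : Type*} [Category D] [MonoidalCategory D] [SymmetricCategory D]
    [Preadditive D] [HasZeroObject D] [HasShift D ℤ]
    [∀ n : ℤ, (CategoryTheory.shiftFunctor D n).Additive] [Pretriangulated D]
    (A B : Mon D) (f : A ⟶ B) (M : Mod D B.X)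
    (i : Mod.regular A.X ⟶ (Mod.comap f.hom).obj M)
    (p : (Mod.comap f.hom).obj M ⟶ Mod.regular A.X)
    (hip : i ≫ p = 𝟙 (Mod.regular A.X)) :
    ∃ r : B.X ⟶ A.X, f.hom ≫ r = 𝟙 A.X := by
  refine ⟨Mod.orbitMap M (η[A.X] ≫ i.hom) ≫ p.hom, ?_⟩
  have hf : f.hom ≫ Mod.orbitMap M (η[A.X] ≫ i.hom) = i.hom :=
    (Mod.comp_orbitMap f.hom M _).trans
      (Mod.orbitMap_one_comp (A := A.X) _ i.hom i.isModHom.smul_hom)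
  -- `η ≫ i.hom` typechecks only after unfolding `(Mod.regular A.X).X`, which defeats `rw`.
  exact (Category.assoc _ _ _).symm.trans
    ((congrArg (· ≫ p.hom) hf).trans (congrArg Mod.Hom.hom hip))
end

section
/- Let $R \to S$ be a ring map that is injective and such that $R$ is a direct summand of $S$ as an $R$-module. If $S$ is a normal integral domain, $R$ is an integral domain, and $S$ is integral over $R$ with the same fraction field (i.e., $R \to S$ is the inclusion into the integral closure of $R$ in its fraction field), then $R = S$; in particular $R$ is integrally closed in its fraction field. -/
/-!
If `s ∈ S ⊆ M⁻¹R` is written `s = a / m`, then `m • s = a` in `S`; applying the `R`-linear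
retraction `r` gives `m * r s = a`, so `r s = s`. Hence `R = S`, and `R` inherits integral
closedness from `S`.
-/

theorem IsLocalization.algebraMap_surjective_of_retraction {R S K : Type*} [CommRing R]
    [CommRing S] [CommRing K] [Algebra R S] [Algebra S K] [Algebra R K] [IsScalarTower R S K]
    (M : Submonoid R) [IsLocalization M K] (hSK : Function.Injective (algebraMap S K))
    (r : S →ₗ[R] R) (hr : Function.LeftInverse r (algebraMap R S)) :
    Function.Surjective (algebraMap R S) := by
  intro s
  obtain ⟨⟨a, m⟩, hs⟩ := IsLocalization.surj M (algebraMap S K s)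
  have hms : (m : R) • s = algebraMap R S a := hSK <| by
    rw [Algebra.smul_def, map_mul, ← IsScalarTower.algebraMap_apply,
      ← IsScalarTower.algebraMap_apply, mul_comm, hs]
  have hmr : r s * m = a := by
    simpa [hr _, mul_comm] using congrArg r hms
  refine ⟨r s, hSK ?_⟩
  rw [← IsScalarTower.algebraMap_apply]
  refine (IsLocalization.map_units K m).mul_right_cancel ?_
  rw [← map_mul, hmr, hs]

theorem eq_of_retraction_integral_closure_general
    (R : Type*) [CommRing R]
    (S : Type*) [CommRing S] [Algebra R S]
    [Algebra S (FractionRing R)] [Algebra R (FractionRing R)]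
    [IsScalarTower R S (FractionRing R)]
    [IsIntegralClosure S R (FractionRing R)]
    [IsIntegrallyClosed S]
    (r : S →ₗ[R] R) (hr : ∀ x : R, r (algebraMap R S x) = x) :
    Function.Surjective (algebraMap R S) ∧ IsIntegrallyClosed R := by
  have hSK := IsIntegralClosure.algebraMap_injective S R (FractionRing R)
  -- The scalar tower refers to the canonical `R`-algebra structure on `FractionRing R`, not to
  -- the separately given instance; clearing the latter lets instance search find the former.
  clear ‹IsIntegralClosure S R (FractionRing R)› ‹Algebra R (FractionRing R)›
  have hsurj := IsLocalization.algebraMap_surjective_of_retraction (nonZeroDivisors R) hSK r hr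
  have hbij : Function.Bijective (algebraMap R S) := ⟨Function.LeftInverse.injective hr, hsurj⟩
  exact ⟨hsurj, .of_equiv (RingEquiv.ofBijective (algebraMap R S) hbij).symm⟩

/-- let `R` be an integral domain and `S` its integral closure in its fraction
field (so `R → S` is injective, `S` is a normal domain, `S` is integral over `R` with the
same fraction field). If `R` is a direct summand of `S` as an `R`-module (i.e. the inclusion
admits an `R`-linear retraction), then `R = S`; in particular `R` is integrally closed in
its fraction field. -/
theorem eq_of_retraction_integral_closure
    (R : Type*) [CommRing R] [IsDomain R]
    (S : Type*) [CommRing S] [IsDomain S] [Algebra R S]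
    [Algebra S (FractionRing R)] [Algebra R (FractionRing R)]
    [IsScalarTower R S (FractionRing R)]
    [IsIntegralClosure S R (FractionRing R)]
    [IsIntegrallyClosed S]
    (hinj : Function.Injective (algebraMap R S))
    (r : S →ₗ[R] R) (hr : ∀ x : R, r (algebraMap R S x) = x) :
    Function.Surjective (algebraMap R S) ∧ IsIntegrallyClosed R :=
  eq_of_retraction_integral_closure_general R S r hr
end

section
/- Let $X$ be an integral Noetherian scheme with normalization $\nu: X^\nu \to X$ a finite birational morphism. If the natural map $\mathcal{O}_X \to \nu_* \mathcal{O}_{X^\nu}$ splits as a map of $\mathcal{O}_X$-modules, then it is an isomorphism, and hence $X$ is normal. -/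
/-!
A retraction `r` of `ν^♯ : 𝒪_X → ν_* 𝒪_Y` that commutes with restriction forces `ν^♯` to be
surjective. By birationality a section `m` of `ν_* 𝒪_Y` agrees near the generic point with
`ν^♯ a` for a section `a` of `𝒪_X` over a smaller open `W`, so `(r m)|_W = r (ν^♯ a) = a`; hence
`ν^♯ (r m)` and `m` have the same generic germ and coincide, `Y` being integral. So `ν^♯` is an
isomorphism, and since `ν` is affine, `ν` is an isomorphism of schemes; the local rings of `X` are
then those of the normal scheme `Y`.
-/

open AlgebraicGeometry CategoryTheory TopologicalSpace

namespace AlgebraicGeometry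

lemma Scheme.Hom.exists_germ_app_eq_of_surjective_stalkMap {X Y : Scheme} (f : Y ⟶ X) {y : Y}
    (hy : Function.Surjective (f.stalkMap y)) {U : X.Opens} (hyU : y ∈ f ⁻¹ᵁ U)
    (m : Γ(Y, f ⁻¹ᵁ U)) :
    ∃ (W : X.Opens) (_ : W ≤ U) (hyW : y ∈ f ⁻¹ᵁ W) (a : Γ(X, W)),
      Y.presheaf.germ (f ⁻¹ᵁ W) y hyW (f.app W a) = Y.presheaf.germ (f ⁻¹ᵁ U) y hyU m := by
  obtain ⟨t, ht⟩ := hy (Y.presheaf.germ (f ⁻¹ᵁ U) y hyU m)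
  obtain ⟨W, hyW, a, rfl⟩ := X.presheaf.exists_germ_eq t
  have hyWU : y ∈ f ⁻¹ᵁ (W ⊓ U) := ⟨hyW, hyU⟩
  refine ⟨W ⊓ U, inf_le_right, hyWU, X.presheaf.map (homOfLE inf_le_left).op a, ?_⟩
  rw [← ht, ← X.presheaf.germ_res_apply (homOfLE inf_le_left) _ hyWU a]
  exact (f.germ_stalkMap_apply _ y hyWU _).symm

lemma Scheme.subsingleton_of_genericPoint_notMem {X : Scheme} [IrreducibleSpace X] {U : X.Opens}
    (hU : genericPoint X ∉ U) : Subsingleton Γ(X, U) := by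
  have hU' : ¬ ((⊤ : Set X) ∩ U).Nonempty :=
    fun h ↦ hU (((genericPoint_spec X).mem_open_set_iff U.isOpen).2 h)
  have : U = ⊥ := SetLike.ext' (by simpa [Set.not_nonempty_iff_eq_empty] using hU')
  exact CommRingCat.subsingleton_of_isTerminal (X.sheaf.isTerminalOfEqEmpty this)

lemma Scheme.Hom.app_apply_eq_of_retraction {X Y : Scheme} [IsIntegral Y] (f : Y ⟶ X)
    (hf : Function.Surjective (f.stalkMap (genericPoint Y)))
    (r : ∀ U : X.Opens, Γ(Y, f ⁻¹ᵁ U) → Γ(X, U))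
    (hnat : ∀ (U V : X.Opens) (h : U ≤ V) (m : Γ(Y, f ⁻¹ᵁ V)),
      r U (Y.presheaf.map ((Opens.map f.base).map (homOfLE h)).op m) =
        X.presheaf.map (homOfLE h).op (r V m))
    (hsplit : ∀ (U : X.Opens) (a : Γ(X, U)), r U (f.app U a) = a)
    (U : X.Opens) (m : Γ(Y, f ⁻¹ᵁ U)) :
    f.app U (r U m) = m := by
  by_cases hξ : genericPoint Y ∈ f ⁻¹ᵁ U
  case neg =>
    have := Scheme.subsingleton_of_genericPoint_notMem hξ
    exact Subsingleton.elim _ _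
  obtain ⟨W, hWU, hξW, a, ha⟩ := f.exists_germ_app_eq_of_surjective_stalkMap hf hξ m
  have hres : f.app W a = Y.presheaf.map ((Opens.map f.base).map (homOfLE hWU)).op m :=
    germ_injective_of_isIntegral Y _ hξW (ha.trans (Y.presheaf.germ_res_apply _ _ hξW m).symm)
  apply germ_injective_of_isIntegral Y _ hξ
  calc Y.presheaf.germ (f ⁻¹ᵁ U) _ hξ (f.app U (r U m))
      = f.stalkMap _ (X.presheaf.germ U _ hξ (r U m)) := (f.germ_stalkMap_apply U _ hξ _).symm
    _ = f.stalkMap _ (X.presheaf.germ W _ hξW (X.presheaf.map (homOfLE hWU).op (r U m))) :=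
        congrArg (f.stalkMap _) (X.presheaf.germ_res_apply (homOfLE hWU) _ hξW (r U m)).symm
    _ = Y.presheaf.germ (f ⁻¹ᵁ W) _ hξW (f.app W (X.presheaf.map (homOfLE hWU).op (r U m))) :=
        f.germ_stalkMap_apply W _ hξW _
    _ = Y.presheaf.germ (f ⁻¹ᵁ W) _ hξW (f.app W a) := by rw [← hnat, ← hres, hsplit]
    _ = Y.presheaf.germ (f ⁻¹ᵁ U) _ hξ m := ha

lemma Scheme.Hom.isIso_of_bijective_app {X Y : Scheme} (f : Y ⟶ X) [IsAffineHom f]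
    (hf : ∀ U : X.affineOpens, Function.Bijective (f.app U)) : IsIso f := by
  rw [← MorphismProperty.isomorphisms.iff, IsZariskiLocalAtTarget.iff_of_iSup_eq_top
    (P := .isomorphisms Scheme) _ (iSup_affineOpens_eq_top X)]
  intro U
  exact (isIso_morphismRestrict_iff_isIso_app f U.2).mpr
    ((ConcreteCategory.isIso_iff_bijective _).mpr (hf U))

lemma isIntegrallyClosed_stalk_of_isIso {X Y : Scheme} (f : Y ⟶ X) [IsIso f] (y : Y)
    [IsIntegrallyClosed (Y.presheaf.stalk y)] :
    IsIntegrallyClosed (X.presheaf.stalk (f.base y)) :=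
  .of_equiv (asIso (f.stalkMap y)).commRingCatIsoToRingEquiv.symm

end AlgebraicGeometry

theorem normal_of_splitting_of_normalization_general
    (X Y : Scheme) [IsIntegral Y]
    (ν : Y ⟶ X) [IsFinite ν]
    (hbir : IsIso (ν.stalkMap (genericPoint Y)))
    (hnorm : ∀ y : Y, IsIntegrallyClosed (Y.presheaf.stalk y))
    (r : ∀ U : X.Opens, Γ(Y, ν ⁻¹ᵁ U) →+ Γ(X, U))
    (hnat : ∀ (U V : X.Opens) (h : U ≤ V) (m : Γ(Y, ν ⁻¹ᵁ V)),
      r U (Y.presheaf.map ((Opens.map ν.base).map (homOfLE h)).op m) =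
        X.presheaf.map (homOfLE h).op (r V m))
    (hsplit : ∀ (U : X.Opens) (a : Γ(X, U)), r U (ν.app U a) = a) :
    (∀ U : X.Opens, Function.Bijective (ν.app U)) ∧
      ∀ x : X, IsIntegrallyClosed (X.presheaf.stalk x) := by
  have hbij (U : X.Opens) : Function.Bijective (ν.app U) :=
    ⟨Function.LeftInverse.injective (hsplit U),
      Function.RightInverse.surjective (ν.app_apply_eq_of_retraction
        (ConcreteCategory.bijective_of_isIso _).2 (fun U ↦ r U) hnat hsplit U)⟩
  have : IsIso ν := ν.isIso_of_bijective_app fun U ↦ hbij U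
  refine ⟨hbij, fun x ↦ ?_⟩
  obtain ⟨y, rfl⟩ := ν.surjective x
  have := hnorm y
  exact isIntegrallyClosed_stalk_of_isIso ν y

/-- let `X` be an integral Noetherian scheme whose normalization
`ν : Xᵛ → X` is a finite birational morphism (e.g. `X` Nagata); here `Y = Xᵛ` is an
integral normal Noetherian scheme, `ν` is finite, maps the generic point to the generic
point, and is an isomorphism at the level of the local rings at generic points
(birational).  If the natural map `𝒪_X → ν_* 𝒪_{Xᵛ}` splits as a map of `𝒪_X`-modules —
i.e. there is a family of additive retractions `r U : Γ(Xᵛ, ν⁻¹U) → Γ(X, U)` which is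
`Γ(X, U)`-linear, compatible with restriction, and splits `ν^♯` — then the natural map is
an isomorphism, and hence `X` is normal (all its local rings are integrally closed). -/
theorem normal_of_splitting_of_normalization
    (X Y : Scheme) [IsIntegral X] [IsIntegral Y] [IsNoetherian X] [IsNoetherian Y]
    (ν : Y ⟶ X) [IsFinite ν]
    (hgen : ν.base (genericPoint Y) = genericPoint X)
    (hbir : IsIso (ν.stalkMap (genericPoint Y)))
    (hnorm : ∀ y : Y, IsIntegrallyClosed (Y.presheaf.stalk y))
    (r : ∀ U : X.Opens, Γ(Y, ν ⁻¹ᵁ U) →+ Γ(X, U))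
    (hlin : ∀ (U : X.Opens) (a : Γ(X, U)) (m : Γ(Y, ν ⁻¹ᵁ U)),
      r U (ν.app U a * m) = a * r U m)
    (hnat : ∀ (U V : X.Opens) (h : U ≤ V) (m : Γ(Y, ν ⁻¹ᵁ V)),
      r U (Y.presheaf.map ((Opens.map ν.base).map (homOfLE h)).op m) =
        X.presheaf.map (homOfLE h).op (r V m))
    (hsplit : ∀ (U : X.Opens) (a : Γ(X, U)), r U (ν.app U a) = a) :
    (∀ U : X.Opens, Function.Bijective (ν.app U)) ∧
      ∀ x : X, IsIntegrallyClosed (X.presheaf.stalk x) :=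
  normal_of_splitting_of_normalization_general X Y ν hbir hnorm r hnat hsplit
end

section
/- Let $\mathcal{T}$ be a triangulated category, $\mathcal{S}$ a class of objects, and $E, F$ objects with $\mathrm{level}^{\mathcal{S}}(E) \leq m$ and $\mathrm{level}^{E}(F) \leq n$. Then $\mathrm{level}^{\mathcal{S}}(F) \leq mn$, i.e., the level is submultiplicative under composition of building: if $E \in \langle \mathcal{S} \rangle_m$ and $F \in \langle E \rangle_n$ then $F \in \langle \mathcal{S} \rangle_{mn}$. -/
/-!
Cones add levels: if `X ⟶ Y ⟶ W ⟶ X⟦1⟧` is distinguished with `X ∈ ⟨S⟩_a` and `Y ∈ ⟨S⟩_b`,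
then `W ∈ ⟨S⟩_{a+b}`. This goes by induction on `b`, writing `Y` as a summand of a cone of
some `A ⟶ B` with `A ∈ ⟨S⟩_{b-1}` and `B ∈ ⟨S⟩_1`; no octahedral axiom is assumed, but
a weak form of it, true in any pretriangulated category up to direct summands, suffices.
Replacing every copy of `E` in a building of `F` by a building of `E` from `S` then gives
`⟨E⟩_n ⊆ ⟨S⟩_{mn}`.
-/

open CategoryTheory CategoryTheory.Limits CategoryTheory.Pretriangulated

universe v u

variable {C : Type u} [Category.{v} C] [Preadditive C] [HasZeroObject C] [HasShift C ℤ]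
  [∀ n : ℤ, (CategoryTheory.shiftFunctor C n).Additive] [Pretriangulated C]

/-- `AddClos S` is the closure of `S` under shifts, finite coproducts and direct summands
(in particular it is closed under isomorphisms, since an isomorphism is a retract). -/
inductive AddClos (S : Set C) : C → Prop
  | of {X : C} (hX : X ∈ S) : AddClos S X
  | zero {X : C} (hX : IsZero X) : AddClos S X
  | shift {X : C} (n : ℤ) (hX : AddClos S X) : AddClos S (X⟦n⟧)
  | sum {X Y : C} (hX : AddClos S X) (hY : AddClos S Y) : AddClos S (X ⊞ Y)
  | retract {X Y : C} (hY : AddClos S Y) (i : X ⟶ Y) (p : Y ⟶ X) (hip : i ≫ p = 𝟙 X) :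
      AddClos S X

/-- The level filtration: `level S 0` consists of the zero objects, `level S 1 = add S`, and
`level S (n+1)` consists of `add` of the cones of morphisms from `level S n` to `level S 1`. -/
def level (S : Set C) : ℕ → Set C
  | 0 => {X | IsZero X}
  | 1 => {X | AddClos S X}
  | (n + 2) => {Z | AddClos {W | ∃ (X Y : C) (f : X ⟶ Y) (g : Y ⟶ W) (h : W ⟶ X⟦(1 : ℤ)⟧),
      X ∈ level S (n + 1) ∧ Y ∈ level S 1 ∧
        Triangle.mk f g h ∈ distinguishedTriangles} Z}

open ZeroObject Preadditive

noncomputable def CategoryTheory.Limits.piWalkingPairIsoBiprod (F : WalkingPair → C) :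
    ∏ᶜ F ≅ F .left ⊞ F .right :=
  HasLimit.isoOfNatIso (diagramIsoPair (Discrete.functor F)) ≪≫ (biprod.isoProd _ _).symm

noncomputable def CategoryTheory.Retract.biprodMap {X₁ Y₁ X₂ Y₂ : C} (e₁ : Retract X₁ Y₁)
    (e₂ : Retract X₂ Y₂) : Retract (X₁ ⊞ X₂) (Y₁ ⊞ Y₂) where
  i := biprod.map e₁.i e₂.i
  r := biprod.map e₁.r e₂.r
  retract := by ext <;> simp

theorem nonempty_retract_cone_of_retract {X Y Y' Z Z' : C} {f : X ⟶ Y} {g : Y ⟶ Z}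
    {h : Z ⟶ X⟦(1 : ℤ)⟧} (hT : Triangle.mk f g h ∈ distTriang C) (e : Retract Y Y')
    {g' : Y' ⟶ Z'} {h' : Z' ⟶ X⟦(1 : ℤ)⟧} (hT' : Triangle.mk (f ≫ e.i) g' h' ∈ distTriang C) :
    Nonempty (Retract Z Z') := by
  let φ := completeDistinguishedTriangleMorphism _ _ hT hT' (𝟙 X) e.i (Category.id_comp _).symm
  let ψ := completeDistinguishedTriangleMorphism _ _ hT' hT (𝟙 X) e.r
    (show (f ≫ e.i) ≫ e.r = 𝟙 X ≫ f by
      rw [Category.assoc, e.retract, Category.comp_id, Category.id_comp])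
  obtain ⟨u, hu, -⟩ := isIso₃_of_isIso₁₂ (φ ≫ ψ) hT hT
    (by change IsIso (𝟙 X ≫ 𝟙 X); infer_instance)
    (by change IsIso (e.i ≫ e.r); rw [e.retract]; infer_instance)
  exact ⟨⟨φ.hom₃, ψ.hom₃ ≫ u, (Category.assoc _ _ _).symm.trans hu⟩⟩

/-- A weak octahedral axiom, valid in any pretriangulated category: for `u : X ⟶ Y` and
`v : Y ⟶ Z` with cones `U` and `V`, the cone of `u ≫ v` is a direct summand of
`(D ⊞ V) ⊞ X⟦1⟧`, where `D` is a cone of the composite `V⟦-1⟧ ⟶ Y ⟶ U`. -/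
theorem nonempty_retract_cone_comp {X Y Z U V W D : C}
    {u : X ⟶ Y} {a : Y ⟶ U} {a' : U ⟶ X⟦(1 : ℤ)⟧} (hTu : Triangle.mk u a a' ∈ distTriang C)
    {v : Y ⟶ Z} {b : Z ⟶ V} {b' : V ⟶ Y⟦(1 : ℤ)⟧} (hTv : Triangle.mk v b b' ∈ distTriang C)
    {c : Z ⟶ W} {c' : W ⟶ X⟦(1 : ℤ)⟧} (hTw : Triangle.mk (u ≫ v) c c' ∈ distTriang C)
    {j : U ⟶ D} {k : D ⟶ V⟦(-1 : ℤ)⟧⟦(1 : ℤ)⟧}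
    (hTD : Triangle.mk ((Triangle.mk v b b').invRotate.mor₁ ≫ a) j k ∈ distTriang C) :
    Nonempty (Retract W ((D ⊞ V) ⊞ X⟦(1 : ℤ)⟧)) := by
  set s : V⟦(-1 : ℤ)⟧ ⟶ Y := (Triangle.mk v b b').invRotate.mor₁
  have hTv' := inv_rot_of_distTriang _ hTv
  have hsv : s ≫ v = 0 := comp_distTriang_mor_zero₁₂ _ hTv'
  have hua : u ≫ a = 0 := comp_distTriang_mor_zero₁₂ _ hTu
  have hsaj : s ≫ a ≫ j = 0 :=
    (Category.assoc _ _ _).symm.trans (comp_distTriang_mor_zero₁₂ _ hTD)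
  obtain ⟨ρ, hρ, -⟩ : ∃ ρ : U ⟶ W, a ≫ ρ = v ≫ c ∧ _ :=
    complete_distinguished_triangle_morphism _ _ hTu hTw (𝟙 X) v (Category.id_comp _).symm
  obtain ⟨β, hβ, -⟩ : ∃ β : W ⟶ V, c ≫ β = 𝟙 Z ≫ b ∧ _ :=
    complete_distinguished_triangle_morphism _ _ hTw hTv u (𝟙 Z) (Category.comp_id _)
  obtain ⟨ψ, hψ⟩ : ∃ ψ : Z ⟶ D, -(a ≫ j) = v ≫ ψ :=
    Triangle.yoneda_exact₂ _ hTv' _ (show s ≫ (-(a ≫ j)) = 0 by rw [comp_neg, hsaj, neg_zero])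
  obtain ⟨i₀, hi₀⟩ : ∃ i₀ : W ⟶ D, ψ = c ≫ i₀ :=
    Triangle.yoneda_exact₂ _ hTw ψ (show (u ≫ v) ≫ ψ = 0 by
      rw [Category.assoc, ← hψ, comp_neg, ← Category.assoc, hua, zero_comp, neg_zero])
  obtain ⟨r₀, hr₀⟩ : ∃ r₀ : D ⟶ W, ρ = j ≫ r₀ :=
    Triangle.yoneda_exact₂ _ hTD ρ (show (s ≫ a) ≫ ρ = 0 by
      rw [Category.assoc, hρ, ← Category.assoc, hsv, zero_comp])
  obtain ⟨τ, hτ⟩ : ∃ τ : V ⟶ W, ψ ≫ r₀ + c = b ≫ τ :=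
    Triangle.yoneda_exact₂ _ hTv _ (show v ≫ (ψ ≫ r₀ + c) = 0 by
      rw [comp_add, ← Category.assoc, ← hψ, neg_comp, Category.assoc, ← hr₀, hρ]
      abel)
  obtain ⟨ε, hε⟩ : ∃ ε : X⟦(1 : ℤ)⟧ ⟶ W, 𝟙 W + i₀ ≫ r₀ - β ≫ τ = c' ≫ ε :=
    Triangle.yoneda_exact₃ _ hTw _ (show c ≫ (𝟙 W + i₀ ≫ r₀ - β ≫ τ) = 0 by
      rw [comp_sub, comp_add, Category.comp_id, ← Category.assoc, ← hi₀,
        ← Category.assoc, hβ, Category.id_comp, ← hτ]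
      abel)
  refine ⟨⟨biprod.lift (biprod.lift i₀ β) c', biprod.desc (biprod.desc (-r₀) τ) ε, ?_⟩⟩
  rw [biprod.lift_desc, biprod.lift_desc, ← hε, comp_neg]
  abel

theorem AddClos.trans {S T : Set C} (hST : ∀ X ∈ T, AddClos S X) {X : C} (hX : AddClos T X) :
    AddClos S X := by
  induction hX with
  | of hX => exact hST _ hX
  | zero hX => exact .zero hX
  | shift n _ ih => exact .shift n ih
  | sum _ _ ih₁ ih₂ => exact .sum ih₁ ih₂
  | retract _ i p hip ih => exact .retract ih i p hip

theorem AddClos.isZero {S : Set C} (hS : ∀ X ∈ S, IsZero X) {X : C} (hX : AddClos S X) :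
    IsZero X := by
  induction hX with
  | of hX => exact hS _ hX
  | zero hX => exact hX
  | shift n _ ih => exact (shiftFunctor C n).map_isZero ih
  | sum _ _ ih₁ ih₂ => exact (biprod_isZero_iff _ _).2 ⟨ih₁, ih₂⟩
  | retract _ i p hip ih => rw [IsZero.iff_id_eq_zero, ← hip, ih.eq_of_tgt i 0, zero_comp]

section level

variable {S : Set C}

theorem mem_level_zero {X : C} : X ∈ level S 0 ↔ IsZero X := by
  rw [level]; rfl

theorem mem_level_one {X : C} : X ∈ level S 1 ↔ AddClos S X := by
  rw [level]; rfl

theorem mem_level_add_two {n : ℕ} {Z : C} :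
    Z ∈ level S (n + 2) ↔ AddClos {W | ∃ (X Y : C) (f : X ⟶ Y) (g : Y ⟶ W)
      (h : W ⟶ X⟦(1 : ℤ)⟧), X ∈ level S (n + 1) ∧ Y ∈ level S 1 ∧
        Triangle.mk f g h ∈ distTriang C} Z := by
  conv_lhs => rw [level]
  rfl

theorem mem_level_of_isZero {n : ℕ} {X : C} (hX : IsZero X) : X ∈ level S n :=
  match n with
  | 0 => mem_level_zero.2 hX
  | 1 => mem_level_one.2 (.zero hX)
  | _ + 2 => mem_level_add_two.2 (.zero hX)

theorem mem_level_of_addClos {n : ℕ} {X : C} (hX : AddClos (level S n) X) : X ∈ level S n :=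
  match n with
  | 0 => mem_level_zero.2 (hX.isZero fun _ => mem_level_zero.1)
  | 1 => mem_level_one.2 (hX.trans fun _ => mem_level_one.1)
  | _ + 2 => mem_level_add_two.2 (hX.trans fun _ => mem_level_add_two.1)

theorem shift_mem_level {n : ℕ} {X : C} (hX : X ∈ level S n) (k : ℤ) :
    X⟦k⟧ ∈ level S n :=
  mem_level_of_addClos (.shift k (.of hX))

theorem biprod_mem_level {n : ℕ} {X Y : C} (hX : X ∈ level S n) (hY : Y ∈ level S n) :
    (X ⊞ Y) ∈ level S n :=
  mem_level_of_addClos (.sum (.of hX) (.of hY))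

theorem mem_level_of_retract {n : ℕ} {X Y : C} (e : Retract X Y) (hY : Y ∈ level S n) :
    X ∈ level S n :=
  mem_level_of_addClos (.retract (.of hY) e.i e.r e.retract)

theorem mem_level_of_iso {n : ℕ} {X Y : C} (e : X ≅ Y) (hY : Y ∈ level S n) :
    X ∈ level S n :=
  mem_level_of_retract e.retract hY

theorem obj₃_mem_level_add_two {n : ℕ} {T : Triangle C} (hT : T ∈ distTriang C)
    (h₁ : T.obj₁ ∈ level S (n + 1)) (h₂ : T.obj₂ ∈ level S 1) :
    T.obj₃ ∈ level S (n + 2) :=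
  mem_level_add_two.2 (.of ⟨_, _, T.mor₁, T.mor₂, T.mor₃, h₁, h₂, hT⟩)

theorem level_monotone (S : Set C) : Monotone (level S) := by
  refine monotone_nat_of_le_succ fun n X hX => ?_
  rcases n with _ | n
  · exact mem_level_of_isZero (mem_level_zero.1 hX)
  · -- `X ≅ X⟦-1⟧⟦1⟧` is the cone of `X⟦-1⟧ ⟶ 0`
    exact mem_level_of_iso ((shiftFunctorCompIsoId C (-1 : ℤ) 1 (by norm_num)).app X).symm
      (obj₃_mem_level_add_two (contractible_distinguished₂ _) (shift_mem_level hX _)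
        (mem_level_of_isZero (isZero_zero C)))

theorem exists_distTriang_retract_of_mem_level_add_two {n : ℕ} {Z : C}
    (hZ : Z ∈ level S (n + 2)) :
    ∃ T ∈ distTriang C, T.obj₁ ∈ level S (n + 1) ∧ T.obj₂ ∈ level S 1 ∧
      Nonempty (Retract Z T.obj₃) := by
  rw [mem_level_add_two] at hZ
  induction hZ with
  | of hZ =>
    obtain ⟨X, Y, f, g, h, hX, hY, hT⟩ := hZ
    exact ⟨_, hT, hX, hY, ⟨.refl _⟩⟩
  | zero hZ =>
    exact ⟨_, contractible_distinguished 0, mem_level_of_isZero (isZero_zero C),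
      mem_level_of_isZero (isZero_zero C), ⟨⟨0, 0, hZ.eq_of_src _ _⟩⟩⟩
  | shift k _ ih =>
    obtain ⟨T, hT, h₁, h₂, ⟨e⟩⟩ := ih
    exact ⟨_, T.shift_distinguished hT k, shift_mem_level h₁ k, shift_mem_level h₂ k,
      ⟨e.map (shiftFunctor C k)⟩⟩
  | sum _ _ ih₁ ih₂ =>
    obtain ⟨T₁, hT₁, h₁₁, h₁₂, ⟨e₁⟩⟩ := ih₁
    obtain ⟨T₂, hT₂, h₂₁, h₂₂, ⟨e₂⟩⟩ := ih₂
    have hT : ∀ j, pairFunction T₁ T₂ j ∈ distTriang C := by rintro ⟨⟩ <;> assumption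
    exact ⟨_, productTriangle_distinguished _ hT,
      mem_level_of_iso (piWalkingPairIsoBiprod _) (biprod_mem_level h₁₁ h₂₁),
      mem_level_of_iso (piWalkingPairIsoBiprod _) (biprod_mem_level h₁₂ h₂₂),
      ⟨(e₁.biprodMap e₂).trans
        (piWalkingPairIsoBiprod fun j => (pairFunction T₁ T₂ j).obj₃).symm.retract⟩⟩
  | retract _ i p hip ih =>
    obtain ⟨T, hT, h₁, h₂, ⟨e⟩⟩ := ih
    exact ⟨T, hT, h₁, h₂, ⟨(Retract.mk i p hip).trans e⟩⟩

end level

theorem obj₃_mem_level_add (S : Set C) {a : ℕ} :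
    ∀ {b : ℕ} {T : Triangle C}, T ∈ distTriang C → T.obj₁ ∈ level S a →
      T.obj₂ ∈ level S b → T.obj₃ ∈ level S (a + b)
  | 0, T, hT, hX, hY =>
    have := (T.isZero₂_iff_isIso₃ hT).1 (mem_level_zero.1 hY)
    mem_level_of_iso (asIso T.mor₃) (shift_mem_level hX 1)
  | 1, T, hT, hX, hY =>
    match a with
    | 0 =>
      have := (T.isZero₁_iff_isIso₂ hT).1 (mem_level_zero.1 hX)
      mem_level_of_iso (asIso T.mor₂).symm hY
    | _ + 1 => obj₃_mem_level_add_two hT hX hY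
  | n + 2, T, hT, hX, hY => by
    -- `T.obj₂` is a summand of the cone `T'.obj₃` of `A ⟶ B`, so `T.obj₃` is a summand of
    -- the cone `W` of `X ⟶ T'.obj₃`, and `W` is a cone of `W'⟦-1⟧ ⟶ B`, where `W'` is a
    -- summand of `(D ⊞ X⟦1⟧) ⊞ B⟦1⟧` with `D` a cone of `X⟦1⟧⟦-1⟧ ⟶ A⟦1⟧`.
    obtain ⟨T', hT', hA, hB, ⟨e⟩⟩ := exists_distTriang_retract_of_mem_level_add_two hY
    obtain ⟨W, g, h, hTW⟩ := distinguished_cocone_triangle (T.mor₁ ≫ e.i)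
    obtain ⟨eW⟩ := nonempty_retract_cone_of_retract hT e hTW
    refine mem_level_of_retract eW ?_
    obtain ⟨W', c, c', hTW'⟩ := distinguished_cocone_triangle (T'.mor₂ ≫ g)
    obtain ⟨D, j, k, hTD⟩ := distinguished_cocone_triangle
      ((Triangle.mk g h (-(T.mor₁ ≫ e.i)⟦(1 : ℤ)⟧')).invRotate.mor₁ ≫ T'.mor₃)
    have hD : D ∈ level S (a + (n + 1)) :=
      obj₃_mem_level_add S hTD (shift_mem_level (shift_mem_level hX 1) (-1))
        (shift_mem_level hA 1)
    obtain ⟨eW'⟩ := nonempty_retract_cone_comp (rot_of_distTriang _ hT')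
      (rot_of_distTriang _ hTW) hTW' hTD
    have hW' : W' ∈ level S (a + n + 1) :=
      mem_level_of_retract eW' (biprod_mem_level (biprod_mem_level hD
        (level_monotone S (by omega) (shift_mem_level hX 1)))
        (level_monotone S (by omega) (shift_mem_level hB 1)))
    exact obj₃_mem_level_add_two (inv_rot_of_distTriang _ hTW') (shift_mem_level hW' (-1)) hB

theorem level_one_subset_of_forall_mem {S T : Set C} {k : ℕ} (hT : ∀ X ∈ T, X ∈ level S k) :
    level T 1 ⊆ level S k :=
  fun _ hX => mem_level_of_addClos ((mem_level_one.1 hX).trans fun Y hY => .of (hT Y hY))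

theorem level_subset_level_mul {S T : Set C} {k : ℕ} (hT : ∀ X ∈ T, X ∈ level S k) :
    ∀ n, level T n ⊆ level S (k * n)
  | 0 => fun _ hX => mem_level_of_isZero (mem_level_zero.1 hX)
  | 1 => (mul_one k).symm ▸ level_one_subset_of_forall_mem hT
  | n + 2 => fun _ hF => mem_level_of_addClos <| (mem_level_add_two.1 hF).trans <| by
      rintro _ ⟨_, _, _, _, _, hX, hY, hTr⟩
      exact .of <| obj₃_mem_level_add S hTr (level_subset_level_mul hT (n + 1) hX)
        (level_one_subset_of_forall_mem hT hY)

/-- submultiplicativity of level: if `E ∈ ⟨S⟩_m` and `F ∈ ⟨E⟩_n`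
then `F ∈ ⟨S⟩_{m·n}`. -/
theorem level_submultiplicative (S : Set C) (E F : C) (m n : ℕ)
    (hE : E ∈ level S m) (hF : F ∈ level ({E} : Set C) n) :
    F ∈ level S (m * n) :=
  level_subset_level_mul (fun _ hX => (Set.mem_singleton_iff.1 hX) ▸ hE) n hF
end
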